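/- Let m ≥ 1, let M, N ⊆ [m] with ∅ ≠ N ⊊ [m], and let D = aΔ_M + cΔ_N^c ⊆ E^m. Then the linear right-E-code C^R_D has length |D| = 2^{|M|}(2^m−2^{|N|}) and size 2^m, and the multiset {wt_Lee(c^R_D(v)) : v ∈ E^m} (with multiplicity over all 2^{2m} elements v ∈ E^m) consists of: 2^{m+|M|} with multiplicity 2^m(2^{m−|M∪N|}−1); 2^{|M|}(2^m−2^{|N|−1}) with multiplicity 2^m(2^{m−|N|}−2^{m−|M∪N|}); 2^{|M|}(2^m−2^{|N|}) with multiplicity 2^m(2^m−2^{m−|N|}); and 0 with multiplicity 2^m. -/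
import Mathlib


open Finset

/-- The simplicial complex `Δ_M ⊆ 𝔽₂^m` generated by `M ⊆ [m]`:
all vectors whose support is contained in `M`. -/
def deltaC {m : ℕ} (M : Finset (Fin m)) : Finset (Fin m → ZMod 2) :=
  Finset.univ.filter (fun w => ∀ i, w i ≠ 0 → i ∈ M)

/-- Dot product over `𝔽₂`. -/
def dotp {m : ℕ} (x y : Fin m → ZMod 2) : ZMod 2 := ∑ i, x i * y i

/-- The Gray map on a single element `a·s + c·t ↔ (s, t)` of `E = 𝔽₂ × 𝔽₂`:
`Φ(as + ct) = (t, s + t)`. -/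
def grayPair (e : ZMod 2 × ZMod 2) : Fin 2 → ZMod 2 := ![e.2, e.1 + e.2]

/-- The left codeword `c^L_D(v)` for `v = aα + cβ ↔ (α, β)`:
its coordinate at `d = (t₁, t₂) ∈ D` is `a(α·t₁) + c(β·t₁) ↔ (α·t₁, β·t₁)`. -/
def cwL {m : ℕ} (Ds : Finset ((Fin m → ZMod 2) × (Fin m → ZMod 2)))
    (v : (Fin m → ZMod 2) × (Fin m → ZMod 2)) :
    {d // d ∈ Ds} → ZMod 2 × ZMod 2 :=
  fun d => (dotp v.1 d.1.1, dotp v.2 d.1.1)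

/-- The Gray image `Φ(c^L_D(v)) ∈ 𝔽₂^{2|D|}` of the left codeword `c^L_D(v)`;
its Hamming weight (`hammingNorm`) is the Lee weight of `c^L_D(v)`. -/
def gcwL {m : ℕ} (Ds : Finset ((Fin m → ZMod 2) × (Fin m → ZMod 2)))
    (v : (Fin m → ZMod 2) × (Fin m → ZMod 2)) :
    {d // d ∈ Ds} × Fin 2 → ZMod 2 :=
  fun x => grayPair (cwL Ds v x.1) x.2

/-- The right codeword `c^R_D(v)` for `v = aα + cβ ↔ (α, β)`:
its coordinate at `d = (t₁, t₂) ∈ D` is `a(t₁·α) + c(t₂·α) ↔ (t₁·α, t₂·α)`. -/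
def cwR {m : ℕ} (Ds : Finset ((Fin m → ZMod 2) × (Fin m → ZMod 2)))
    (v : (Fin m → ZMod 2) × (Fin m → ZMod 2)) :
    {d // d ∈ Ds} → ZMod 2 × ZMod 2 :=
  fun d => (dotp d.1.1 v.1, dotp d.1.2 v.1)

/-- The Gray image `Φ(c^R_D(v)) ∈ 𝔽₂^{2|D|}` of the right codeword `c^R_D(v)`;
its Hamming weight (`hammingNorm`) is the Lee weight of `c^R_D(v)`. -/
def gcwR {m : ℕ} (Ds : Finset ((Fin m → ZMod 2) × (Fin m → ZMod 2)))
    (v : (Fin m → ZMod 2) × (Fin m → ZMod 2)) :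
    {d // d ∈ Ds} × Fin 2 → ZMod 2 :=
  fun x => grayPair (cwR Ds v x.1) x.2



lemma zmod2_cases (a : ZMod 2) : a = 0 ∨ a = 1 := by revert a; decide

lemma mem_deltaC {m : ℕ} {S : Finset (Fin m)} {w : Fin m → ZMod 2} :
    w ∈ deltaC S ↔ ∀ i, w i ≠ 0 → i ∈ S := by simp [deltaC]

lemma deltaC_mono {m : ℕ} {S T : Finset (Fin m)} (h : S ⊆ T) : deltaC S ⊆ deltaC T := by
  intro w hw
  rw [mem_deltaC] at *
  exact fun i hi => h (hw i hi)

lemma deltaC_univ {m : ℕ} : deltaC (Finset.univ : Finset (Fin m)) = Finset.univ := by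
  simp [deltaC]

lemma deltaC_eq_piFinset {m : ℕ} (S : Finset (Fin m)) :
    deltaC S = Fintype.piFinset (fun i => if i ∈ S then Finset.univ else {0}) := by
  ext w
  simp only [mem_deltaC, Fintype.mem_piFinset]
  constructor
  · intro h i
    by_cases hi : i ∈ S
    · simp [hi]
    · simp only [hi, if_false, Finset.mem_singleton]
      by_contra hw
      exact hi (h i hw)
  · intro h i hi
    by_contra hiS
    have := h i
    simp [hiS] at this
    exact hi this

lemma card_deltaC {m : ℕ} (S : Finset (Fin m)) : (deltaC S).card = 2 ^ S.card := by
  rw [deltaC_eq_piFinset, Fintype.card_piFinset]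
  have : ∀ i : Fin m, ((if i ∈ S then (Finset.univ : Finset (ZMod 2)) else {0})).card
      = if i ∈ S then 2 else 1 := by
    intro i; by_cases hi : i ∈ S <;> simp [hi]
  rw [Finset.prod_congr rfl (fun i _ => this i)]
  rw [Finset.prod_ite_mem Finset.univ S (fun _ => 2), Finset.univ_inter, Finset.prod_const]

lemma dotp_vanish {m : ℕ} {S : Finset (Fin m)} {α t : Fin m → ZMod 2}
    (h : ∀ i ∈ S, α i = 0) (ht : t ∈ deltaC S) : dotp t α = 0 := by
  rw [mem_deltaC] at ht
  apply Finset.sum_eq_zero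
  intro i _
  by_cases hti : t i = 0
  · rw [hti, zero_mul]
  · rw [h i (ht i hti), mul_zero]

lemma dotp_add_left {m : ℕ} (t t' α : Fin m → ZMod 2) :
    dotp (t + t') α = dotp t α + dotp t' α := by
  unfold dotp
  rw [← Finset.sum_add_distrib]
  exact Finset.sum_congr rfl (fun i _ => by simp [add_mul])

lemma dotp_single {m : ℕ} (i₀ : Fin m) (α : Fin m → ZMod 2) :
    dotp (Pi.single i₀ 1) α = α i₀ := by
  unfold dotp
  rw [Finset.sum_eq_single i₀]
  · simp
  · intro b _ hb; simp [Pi.single_eq_of_ne hb]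
  · simp

lemma count1_add_count0 {m : ℕ} (S : Finset (Fin m)) (α : Fin m → ZMod 2) :
    ((deltaC S).filter (fun t => dotp t α = 1)).card
      + ((deltaC S).filter (fun t => dotp t α = 0)).card = 2 ^ S.card := by
  rw [← card_deltaC S]
  have : (deltaC S).filter (fun t => dotp t α = 0)
      = (deltaC S).filter (fun t => ¬ (dotp t α = 1)) := by
    apply Finset.filter_congr
    intro t _
    rcases zmod2_cases (dotp t α) with h | h <;> simp [h]
  rw [this]
  exact Finset.card_filter_add_card_filter_not _

lemma count1_eq_count0 {m : ℕ} {S : Finset (Fin m)} {α : Fin m → ZMod 2}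
    (h : ∃ i ∈ S, α i ≠ 0) :
    ((deltaC S).filter (fun t => dotp t α = 1)).card
      = ((deltaC S).filter (fun t => dotp t α = 0)).card := by
  obtain ⟨i₀, hi₀S, hα⟩ := h
  have hα1 : α i₀ = 1 := by rcases zmod2_cases (α i₀) with h | h; exacts [absurd h hα, h]
  set e : Fin m → ZMod 2 := Pi.single i₀ 1 with he
  have hmem : ∀ t ∈ deltaC S, t + e ∈ deltaC S := by
    intro t ht
    rw [mem_deltaC] at ht ⊢
    intro i hi
    by_cases hii : i = i₀
    · exact hii ▸ hi₀S
    · apply ht i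
      have : e i = 0 := Pi.single_eq_of_ne hii 1
      simpa [this] using hi
  have hdot : ∀ t : Fin m → ZMod 2, dotp (t + e) α = dotp t α + 1 := by
    intro t
    rw [dotp_add_left, he, dotp_single, hα1]
  have hinv : ∀ t : Fin m → ZMod 2, t + e + e = t := by
    intro t
    funext i
    simp only [Pi.add_apply]
    rw [add_assoc, CharTwo.add_self_eq_zero, add_zero]
  apply Finset.card_bij' (fun t _ => t + e) (fun t _ => t + e)
  · intro t ht
    simp only [Finset.mem_filter] at ht ⊢
    exact ⟨hmem t ht.1, by rw [hdot, ht.2]; decide⟩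
  · intro t ht
    simp only [Finset.mem_filter] at ht ⊢
    exact ⟨hmem t ht.1, by rw [hdot, ht.2]; decide⟩
  · intro t ht; exact hinv t
  · intro t ht; exact hinv t

lemma count1_of_exists {m : ℕ} {S : Finset (Fin m)} {α : Fin m → ZMod 2}
    (h : ∃ i ∈ S, α i ≠ 0) :
    2 * ((deltaC S).filter (fun t => dotp t α = 1)).card = 2 ^ S.card := by
  have := count1_add_count0 S α
  rw [← count1_eq_count0 h] at this
  omega

lemma count1_of_vanish {m : ℕ} {S : Finset (Fin m)} {α : Fin m → ZMod 2}
    (h : ∀ i ∈ S, α i = 0) :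
    ((deltaC S).filter (fun t => dotp t α = 1)).card = 0 := by
  rw [Finset.card_eq_zero, Finset.filter_eq_empty_iff]
  intro t ht
  rw [dotp_vanish h ht]
  decide

lemma card_filter_compl {γ : Type*} [Fintype γ] [DecidableEq γ] (s : Finset γ)
    (p : γ → Prop) [DecidablePred p] :
    ((sᶜ).filter p).card + (s.filter p).card = (Finset.univ.filter p).card := by
  rw [← Finset.card_union_of_disjoint (Finset.disjoint_filter_filter disjoint_compl_left),
    ← Finset.filter_union]
  congr 2
  ext x
  by_cases h : x ∈ s <;> simp [h]


-- counts over univ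
lemma count1_univ {m : ℕ} {α : Fin m → ZMod 2} (h : α ≠ 0) :
    2 * ((Finset.univ : Finset (Fin m → ZMod 2)).filter (fun t => dotp t α = 1)).card
      = 2 ^ m := by
  rw [← deltaC_univ]
  have hx : ∃ i ∈ (Finset.univ : Finset (Fin m)), α i ≠ 0 := by
    obtain ⟨i, hi⟩ := Function.ne_iff.mp h
    exact ⟨i, Finset.mem_univ i, hi⟩
  have := count1_of_exists hx
  simpa using this

lemma count0_univ {m : ℕ} {α : Fin m → ZMod 2} (h : α ≠ 0) :
    2 * ((Finset.univ : Finset (Fin m → ZMod 2)).filter (fun t => dotp t α = 0)).card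
      = 2 ^ m := by
  have h1 := count1_univ h
  have h2 := count1_add_count0 (Finset.univ : Finset (Fin m)) α
  rw [deltaC_univ] at h2
  simp only [Finset.card_univ, Fintype.card_fin] at h2
  omega

lemma weight_formula {m : ℕ} (M N : Finset (Fin m))
    (Ds : Finset ((Fin m → ZMod 2) × (Fin m → ZMod 2)))
    (hDs : Ds = deltaC M ×ˢ (deltaC N)ᶜ)
    (v : (Fin m → ZMod 2) × (Fin m → ZMod 2)) :
    hammingNorm (gcwR Ds v) =
      (deltaC M).card * (((deltaC N)ᶜ).filter (fun t => dotp t v.1 = 1)).card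
      + (((deltaC M).filter (fun t => dotp t v.1 = 1)).card
          * (((deltaC N)ᶜ).filter (fun t => dotp t v.1 = 0)).card
        + ((deltaC M).filter (fun t => dotp t v.1 = 0)).card
          * (((deltaC N)ᶜ).filter (fun t => dotp t v.1 = 1)).card) := by
  classical
  set α := v.1 with hα
  have h1 : hammingNorm (gcwR Ds v)
      = ∑ d ∈ Ds, ((if dotp d.2 α = 1 then 1 else 0)
          + (if dotp d.1 α + dotp d.2 α = 1 then 1 else 0)) := by
    rw [hammingNorm, Finset.card_filter, Fintype.sum_prod_type]
    rw [← Finset.sum_coe_sort Ds]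
    apply Finset.sum_congr rfl
    intro d _
    rw [Fin.sum_univ_two]
    have e0 : gcwR Ds v (d, 0) = dotp d.1.2 α := rfl
    have e1 : gcwR Ds v (d, 1) = dotp d.1.1 α + dotp d.1.2 α := rfl
    rw [e0, e1]
    congr 1
    · rcases zmod2_cases (dotp d.1.2 α) with h | h <;> simp [h]
    · rcases zmod2_cases (dotp d.1.1 α + dotp d.1.2 α) with h | h <;> simp [h]
  rw [h1, hDs, Finset.sum_product]
  have h2 : ∀ t₁ ∈ deltaC M, ∑ t₂ ∈ (deltaC N)ᶜ, ((if dotp t₂ α = 1 then 1 else 0)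
          + (if dotp t₁ α + dotp t₂ α = 1 then 1 else 0))
      = (((deltaC N)ᶜ).filter (fun t => dotp t α = 1)).card
        + (if dotp t₁ α = 1
            then (((deltaC N)ᶜ).filter (fun t => dotp t α = 0)).card
            else (((deltaC N)ᶜ).filter (fun t => dotp t α = 1)).card) := by
    intro t₁ _
    rw [Finset.sum_add_distrib]
    congr 1
    · rw [Finset.card_filter]
    · rcases zmod2_cases (dotp t₁ α) with h | h
      · rw [h, if_neg (by decide), Finset.card_filter]
        apply Finset.sum_congr rfl
        intro t₂ _
        rw [zero_add]
      · rw [h, if_pos rfl, Finset.card_filter]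
        apply Finset.sum_congr rfl
        intro t₂ _
        congr 1
        rcases zmod2_cases (dotp t₂ α) with h2 | h2 <;> simp [h2]
  rw [Finset.sum_congr rfl h2, Finset.sum_add_distrib, Finset.sum_const, smul_eq_mul]
  congr 1
  rw [Finset.sum_ite, Finset.sum_const, Finset.sum_const, smul_eq_mul, smul_eq_mul]
  congr 2
  congr 1
  apply Finset.filter_congr
  intro t _
  rcases zmod2_cases (dotp t α) with h | h <;> simp [h]

lemma weight_case0 {m : ℕ} (M N : Finset (Fin m))
    (Ds : Finset ((Fin m → ZMod 2) × (Fin m → ZMod 2)))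
    (hDs : Ds = deltaC M ×ˢ (deltaC N)ᶜ)
    (v : (Fin m → ZMod 2) × (Fin m → ZMod 2))
    (h0 : v.1 = 0) : hammingNorm (gcwR Ds v) = 0 := by
  rw [hammingNorm_eq_zero]
  funext x
  have hd : ∀ t : Fin m → ZMod 2, dotp t v.1 = 0 := by
    intro t
    rw [h0]
    exact Finset.sum_eq_zero (fun i _ => mul_zero _)
  show grayPair (cwR Ds v x.1) x.2 = 0
  unfold cwR
  rw [hd, hd]
  unfold grayPair
  rcases zmod2_cases x.2 with h | h
  all_goals rw [h]; simp

lemma weight_case1 {m : ℕ} (M N : Finset (Fin m))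
    (Ds : Finset ((Fin m → ZMod 2) × (Fin m → ZMod 2)))
    (hDs : Ds = deltaC M ×ˢ (deltaC N)ᶜ)
    (v : (Fin m → ZMod 2) × (Fin m → ZMod 2))
    (hm : 1 ≤ m) (hne : v.1 ≠ 0) (hvan : ∀ i ∈ M ∪ N, v.1 i = 0) :
    hammingNorm (gcwR Ds v) = 2 ^ (m + M.card) := by
  set α := v.1 with hα
  have hvM : ∀ i ∈ M, α i = 0 := fun i hi => hvan i (Finset.mem_union_left _ hi)
  have hvN : ∀ i ∈ N, α i = 0 := fun i hi => hvan i (Finset.mem_union_right _ hi)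
  have hA1 : ((deltaC M).filter (fun t => dotp t α = 1)).card = 0 := count1_of_vanish hvM
  have hA0 : ((deltaC M).filter (fun t => dotp t α = 0)).card = 2 ^ M.card := by
    have := count1_add_count0 M α; omega
  have hB1 : 2 * (((deltaC N)ᶜ).filter (fun t => dotp t α = 1)).card = 2 ^ m := by
    have h1 := card_filter_compl (deltaC N) (fun t => dotp t α = 1)
    rw [count1_of_vanish hvN] at h1
    have h2 := count1_univ hne
    omega
  rw [weight_formula M N Ds hDs v, ← hα, hA1, hA0, card_deltaC]
  have hP : 2 ^ m = 2 * 2 ^ (m - 1) := by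
    rw [← pow_succ']
    congr 1
    omega
  rw [pow_add]
  set B1 := (((deltaC N)ᶜ).filter (fun t => dotp t α = 1)).card
  have hB1' : B1 = 2 ^ (m - 1) := by omega
  rw [hB1', hP]
  ring

lemma weight_case2 {m : ℕ} (M N : Finset (Fin m))
    (Ds : Finset ((Fin m → ZMod 2) × (Fin m → ZMod 2)))
    (hDs : Ds = deltaC M ×ˢ (deltaC N)ᶜ)
    (v : (Fin m → ZMod 2) × (Fin m → ZMod 2))
    (hm : 1 ≤ m) (hNlt : N.card < m) (hNpos : 1 ≤ N.card)
    (hvN : ∀ i ∈ N, v.1 i = 0) (hexM : ∃ i ∈ M, v.1 i ≠ 0) :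
    hammingNorm (gcwR Ds v) = 2 ^ M.card * (2 ^ m - 2 ^ (N.card - 1)) := by
  set α := v.1 with hα
  have hne : α ≠ 0 := by
    obtain ⟨i, _, hi⟩ := hexM
    exact fun h => hi (by rw [hα] at h ⊢; rw [h]; rfl)
  have hMpos : 1 ≤ M.card := by
    obtain ⟨i, hi, _⟩ := hexM
    exact Finset.card_pos.mpr ⟨i, hi⟩
  set A1 := ((deltaC M).filter (fun t => dotp t α = 1)).card with hA1d
  set A0 := ((deltaC M).filter (fun t => dotp t α = 0)).card with hA0d
  set B1 := (((deltaC N)ᶜ).filter (fun t => dotp t α = 1)).card with hB1d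
  set B0 := (((deltaC N)ᶜ).filter (fun t => dotp t α = 0)).card with hB0d
  have hQ : 2 ^ M.card = 2 * 2 ^ (M.card - 1) := by
    rw [← pow_succ']; congr 1; omega
  have hP : 2 ^ m = 2 * 2 ^ (m - 1) := by
    rw [← pow_succ']; congr 1; omega
  have hn : 2 ^ N.card = 2 * 2 ^ (N.card - 1) := by
    rw [← pow_succ']; congr 1; omega
  have hA1 : A1 = 2 ^ (M.card - 1) := by
    have h1 := count1_of_exists hexM
    rw [← hA1d, hQ] at h1
    omega
  have hA0 : A0 = 2 ^ (M.card - 1) := by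
    have h1 := count1_add_count0 M α
    rw [← hA1d, ← hA0d, hQ] at h1
    omega
  have hB1 : B1 = 2 ^ (m - 1) := by
    have h1 := card_filter_compl (deltaC N) (fun t => dotp t α = 1)
    rw [count1_of_vanish hvN] at h1
    have h2 := count1_univ hne
    rw [hP] at h2
    simp only [← hB1d] at h1
    omega
  have hB0 : B0 + 2 ^ N.card = 2 ^ (m - 1) := by
    have h1 := card_filter_compl (deltaC N) (fun t => dotp t α = 0)
    have h2 : ((deltaC N).filter (fun t => dotp t α = 0)).card = 2 ^ N.card := by
      have := count1_add_count0 N α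
      rw [count1_of_vanish hvN] at this
      omega
    have h3 := count0_univ hne
    rw [hP] at h3
    rw [h2] at h1
    simp only [← hB0d] at h1
    omega
  rw [weight_formula M N Ds hDs v, ← hα, ← hA1d, ← hA0d, ← hB1d, ← hB0d, card_deltaC]
  rw [hA1, hA0, hB1]
  have hle : 2 ^ (N.card - 1) ≤ 2 ^ m := Nat.pow_le_pow_right (by norm_num) (by omega)
  zify [hle]
  rw [hn] at hB0
  have hB0' : (B0 : ℤ) + 2 * 2 ^ (N.card - 1) = 2 ^ (m - 1) := by exact_mod_cast hB0
  have hQ' : (2 : ℤ) ^ M.card = 2 * 2 ^ (M.card - 1) := by exact_mod_cast hQ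
  have hP' : (2 : ℤ) ^ m = 2 * 2 ^ (m - 1) := by exact_mod_cast hP
  rw [hQ', hP']
  linear_combination (2 : ℤ) ^ (M.card - 1) * hB0'

lemma weight_case3 {m : ℕ} (M N : Finset (Fin m))
    (Ds : Finset ((Fin m → ZMod 2) × (Fin m → ZMod 2)))
    (hDs : Ds = deltaC M ×ˢ (deltaC N)ᶜ)
    (v : (Fin m → ZMod 2) × (Fin m → ZMod 2))
    (hm : 1 ≤ m) (hNpos : 1 ≤ N.card)
    (hexN : ∃ i ∈ N, v.1 i ≠ 0) :
    hammingNorm (gcwR Ds v) = 2 ^ M.card * (2 ^ m - 2 ^ N.card) := by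
  set α := v.1 with hα
  have hne : α ≠ 0 := by
    obtain ⟨i, _, hi⟩ := hexN
    exact fun h => hi (by rw [hα] at h ⊢; rw [h]; rfl)
  set A1 := ((deltaC M).filter (fun t => dotp t α = 1)).card with hA1d
  set A0 := ((deltaC M).filter (fun t => dotp t α = 0)).card with hA0d
  set B1 := (((deltaC N)ᶜ).filter (fun t => dotp t α = 1)).card with hB1d
  set B0 := (((deltaC N)ᶜ).filter (fun t => dotp t α = 0)).card with hB0d
  have hP : 2 ^ m = 2 * 2 ^ (m - 1) := by
    rw [← pow_succ']; congr 1; omega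
  have hn : 2 ^ N.card = 2 * 2 ^ (N.card - 1) := by
    rw [← pow_succ']; congr 1; omega
  have hA : A1 + A0 = 2 ^ M.card := count1_add_count0 M α
  have hcN1 : ((deltaC N).filter (fun t => dotp t α = 1)).card = 2 ^ (N.card - 1) := by
    have h1 := count1_of_exists hexN
    rw [hn] at h1
    omega
  have hcN0 : ((deltaC N).filter (fun t => dotp t α = 0)).card = 2 ^ (N.card - 1) := by
    rw [← count1_eq_count0 hexN]
    exact hcN1
  have hB1 : B1 + 2 ^ (N.card - 1) = 2 ^ (m - 1) := by
    have h1 := card_filter_compl (deltaC N) (fun t => dotp t α = 1)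
    have h2 := count1_univ hne
    rw [hP] at h2
    rw [hcN1] at h1
    simp only [← hB1d] at h1
    omega
  have hB0 : B0 = B1 := by
    have h1 := card_filter_compl (deltaC N) (fun t => dotp t α = 0)
    have h3 := count0_univ hne
    rw [hP] at h3
    rw [hcN0] at h1
    simp only [← hB0d] at h1
    omega
  rw [weight_formula M N Ds hDs v, ← hα, ← hA1d, ← hA0d, ← hB1d, ← hB0d, card_deltaC]
  rw [hB0]
  have hNle : N.card ≤ m := by simpa using Finset.card_le_univ N
  have hle : 2 ^ N.card ≤ 2 ^ m := Nat.pow_le_pow_right (by norm_num) hNle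
  zify [hle]
  have hA' : (A1 : ℤ) + A0 = 2 ^ M.card := by exact_mod_cast hA
  have hB1' : (B1 : ℤ) + 2 ^ (N.card - 1) = 2 ^ (m - 1) := by exact_mod_cast hB1
  have hP' : (2 : ℤ) ^ m = 2 * 2 ^ (m - 1) := by exact_mod_cast hP
  have hn' : (2 : ℤ) ^ N.card = 2 * 2 ^ (N.card - 1) := by exact_mod_cast hn
  rw [hP', hn']
  linear_combination (B1 : ℤ) * hA' + 2 * 2 ^ M.card * hB1'

lemma mem_deltaC_compl {m : ℕ} {S : Finset (Fin m)} {w : Fin m → ZMod 2} :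
    w ∈ deltaC Sᶜ ↔ ∀ i ∈ S, w i = 0 := by
  rw [mem_deltaC]
  constructor
  · intro h i hi
    by_contra hw
    exact (Finset.mem_compl.mp (h i hw)) hi
  · intro h i hw
    rw [Finset.mem_compl]
    exact fun hi => hw (h i hi)

lemma zero_mem_deltaC {m : ℕ} (S : Finset (Fin m)) : (0 : Fin m → ZMod 2) ∈ deltaC S := by
  rw [mem_deltaC]
  intro i hi
  exact absurd rfl hi


theorem stmt_12 {m : ℕ} (hm : 1 ≤ m) (M N : Finset (Fin m))
    (hN : N ≠ ∅) (hNu : N ≠ Finset.univ)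
    (Ds : Finset ((Fin m → ZMod 2) × (Fin m → ZMod 2)))
    (hDs : Ds = deltaC M ×ˢ (deltaC N)ᶜ) :
    Ds.card = 2 ^ M.card * (2 ^ m - 2 ^ N.card) ∧
    ((Finset.univ : Finset ((Fin m → ZMod 2) × (Fin m → ZMod 2))).image (cwR Ds)).card = 2 ^ m ∧
    (Finset.univ : Finset ((Fin m → ZMod 2) × (Fin m → ZMod 2))).val.map (fun v => hammingNorm (gcwR Ds v)) =
      Multiset.replicate (2 ^ m * (2 ^ (m - (M ∪ N).card) - 1))
          (2 ^ (m + M.card)) +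
      Multiset.replicate (2 ^ m * (2 ^ (m - N.card) - 2 ^ (m - (M ∪ N).card)))
          (2 ^ M.card * (2 ^ m - 2 ^ (N.card - 1))) +
      Multiset.replicate (2 ^ m * (2 ^ m - 2 ^ (m - N.card)))
          (2 ^ M.card * (2 ^ m - 2 ^ N.card)) +
      Multiset.replicate (2 ^ m)
          (0) := by
  classical
  have hcard_fun : Fintype.card (Fin m → ZMod 2) = 2 ^ m := by
    rw [Fintype.card_fun]
    simp [ZMod]
  have hNpos : 1 ≤ N.card := Finset.card_pos.mpr (Finset.nonempty_iff_ne_empty.mpr hN)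
  have hNlt : N.card < m := by
    have h1 : N ⊂ Finset.univ := Finset.ssubset_univ_iff.mpr hNu
    have h2 := Finset.card_lt_card h1
    simpa using h2
  refine ⟨?_, ?_, ?_⟩
  · -- cardinality of Ds
    rw [hDs, Finset.card_product, card_deltaC, Finset.card_compl, card_deltaC, hcard_fun]
  · -- size of the code
    set G : (Fin m → ZMod 2) → ({d // d ∈ Ds} → ZMod 2 × ZMod 2) :=
      fun α d => (dotp d.1.1 α, dotp d.1.2 α) with hG
    have hcw : cwR Ds = fun v => G v.1 := rfl
    have hGinj : Function.Injective G := by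
      intro α α' h
      -- key : agree on all t ∉ deltaC N
      have key : ∀ t : Fin m → ZMod 2, t ∉ deltaC N → dotp t α = dotp t α' := by
        intro t ht
        have hd : ((0 : Fin m → ZMod 2), t) ∈ Ds := by
          rw [hDs, Finset.mem_product]
          exact ⟨zero_mem_deltaC M, Finset.mem_compl.mpr ht⟩
        have := congrFun h ⟨(0, t), hd⟩
        exact congrArg Prod.snd this
      have hex : ∃ j, j ∉ N := by
        by_contra hc
        push_neg at hc
        exact hNu (Finset.eq_univ_iff_forall.mpr hc)
      obtain ⟨j₀, hj₀⟩ := hex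
      have hsingle : ∀ i : Fin m, i ∉ N → dotp (Pi.single i 1) α = dotp (Pi.single i 1) α' := by
        intro i hi
        apply key
        rw [mem_deltaC]
        push_neg
        exact ⟨i, by simp, hi⟩
      have hj₀eq : α j₀ = α' j₀ := by
        have := hsingle j₀ hj₀
        rwa [dotp_single, dotp_single] at this
      funext i
      by_cases hi : i ∈ N
      · have hne : i ≠ j₀ := fun h => hj₀ (h ▸ hi)
        have hmem : (Pi.single i 1 + Pi.single j₀ 1 : Fin m → ZMod 2) ∉ deltaC N := by
          rw [mem_deltaC]
          push_neg
          refine ⟨j₀, ?_, hj₀⟩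
          simp [Pi.single_eq_of_ne (Ne.symm hne)]
        have := key _ hmem
        rw [dotp_add_left, dotp_add_left, dotp_single, dotp_single, dotp_single,
          dotp_single, hj₀eq] at this
        exact add_right_cancel this
      · have := hsingle i hi
        rwa [dotp_single, dotp_single] at this
    rw [hcw]
    have himage : (Finset.univ : Finset ((Fin m → ZMod 2) × (Fin m → ZMod 2))).image
        (fun v => G v.1) = Finset.univ.image G := by
      apply Finset.Subset.antisymm
      · intro x hx
        obtain ⟨v, _, rfl⟩ := Finset.mem_image.mp hx
        exact Finset.mem_image.mpr ⟨v.1, Finset.mem_univ _, rfl⟩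
      · intro x hx
        obtain ⟨α, _, rfl⟩ := Finset.mem_image.mp hx
        exact Finset.mem_image.mpr ⟨(α, 0), Finset.mem_univ _, rfl⟩
    rw [himage, Finset.card_image_of_injective _ hGinj, Finset.card_univ, hcard_fun]
  · -- the multiset of weights
    set A1 : Finset (Fin m → ZMod 2) := (deltaC ((M ∪ N)ᶜ)).erase 0 with hA1
    set A2 : Finset (Fin m → ZMod 2) := deltaC (Nᶜ) \ deltaC ((M ∪ N)ᶜ) with hA2
    set A3 : Finset (Fin m → ZMod 2) := (deltaC (Nᶜ))ᶜ with hA3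
    set A0 : Finset (Fin m → ZMod 2) := {0} with hA0
    have hsub : deltaC ((M ∪ N)ᶜ) ⊆ deltaC (Nᶜ) :=
      deltaC_mono (Finset.compl_subset_compl.mpr Finset.subset_union_right)
    set U : Finset (Fin m → ZMod 2) := Finset.univ with hU
    have d12 : Disjoint (A1 ×ˢ U) (A2 ×ˢ U) := by
      rw [Finset.disjoint_left]
      rintro ⟨α, β⟩ h1 h2
      rw [Finset.mem_product] at h1 h2
      exact (Finset.mem_sdiff.mp h2.1).2 (Finset.mem_of_mem_erase h1.1)
    have d3 : Disjoint ((A1 ×ˢ U).disjUnion (A2 ×ˢ U) d12) (A3 ×ˢ U) := by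
      rw [Finset.disjoint_left]
      rintro ⟨α, β⟩ h1 h2
      rw [Finset.mem_disjUnion] at h1
      rw [Finset.mem_product] at h2
      have h3 := Finset.mem_compl.mp h2.1
      rcases h1 with h1 | h1 <;> rw [Finset.mem_product] at h1
      · exact h3 (hsub (Finset.mem_of_mem_erase h1.1))
      · exact h3 (Finset.mem_sdiff.mp h1.1).1
    have d0 : Disjoint (((A1 ×ˢ U).disjUnion (A2 ×ˢ U) d12).disjUnion (A3 ×ˢ U) d3)
        (A0 ×ˢ U) := by
      rw [Finset.disjoint_left]
      rintro ⟨α, β⟩ h1 h2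
      rw [Finset.mem_product, hA0, Finset.mem_singleton] at h2
      rw [Finset.mem_disjUnion, Finset.mem_disjUnion] at h1
      rcases h1 with (h1 | h1) | h1 <;> rw [Finset.mem_product] at h1
      · exact (Finset.ne_of_mem_erase h1.1) h2.1
      · exact (Finset.mem_sdiff.mp h1.1).2 (h2.1 ▸ zero_mem_deltaC _)
      · exact (Finset.mem_compl.mp h1.1) (h2.1 ▸ zero_mem_deltaC _)
    have hpart : (Finset.univ : Finset ((Fin m → ZMod 2) × (Fin m → ZMod 2)))
        = (((A1 ×ˢ U).disjUnion (A2 ×ˢ U) d12).disjUnion (A3 ×ˢ U) d3).disjUnion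
            (A0 ×ˢ U) d0 := by
      apply Finset.Subset.antisymm
      · rintro ⟨α, β⟩ _
        rw [Finset.mem_disjUnion, Finset.mem_disjUnion, Finset.mem_disjUnion]
        simp only [Finset.mem_product, hU, Finset.mem_univ, and_true]
        by_cases h0 : α = 0
        · right; rw [hA0, Finset.mem_singleton]; exact h0
        · by_cases h3 : α ∈ deltaC (Nᶜ)
          · by_cases h1 : α ∈ deltaC ((M ∪ N)ᶜ)
            · left; left; left; exact Finset.mem_erase.mpr ⟨h0, h1⟩
            · left; left; right; exact Finset.mem_sdiff.mpr ⟨h3, h1⟩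
          · left; right; exact Finset.mem_compl.mpr h3
      · intro x _; exact Finset.mem_univ x
    have hval : ∀ (s t : Finset ((Fin m → ZMod 2) × (Fin m → ZMod 2))) (h : Disjoint s t),
        (s.disjUnion t h).val = s.val + t.val := fun _ _ _ => rfl
    rw [hpart, hval, hval, hval, Multiset.map_add, Multiset.map_add, Multiset.map_add]
    have hcompl_card : ∀ S : Finset (Fin m), (Sᶜ).card = m - S.card := by
      intro S
      rw [Finset.card_compl]
      simp
    congr 1
    congr 1
    congr 1
    · -- A1 part
      apply Multiset.eq_replicate.mpr
      constructor
      · rw [Multiset.card_map, Finset.card_val, Finset.card_product, hA1,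
          Finset.card_erase_of_mem (zero_mem_deltaC _), card_deltaC, hcompl_card,
          hU, Finset.card_univ, hcard_fun]
        ring
      · intro b hb
        obtain ⟨v, hv, rfl⟩ := Multiset.mem_map.mp hb
        rw [Finset.mem_val, Finset.mem_product, hA1, Finset.mem_erase] at hv
        have hmem := Finset.mem_erase.mp (by rw [← hA1]; exact Finset.mem_erase.mpr hv.1)
        exact weight_case1 M N Ds hDs v hm hv.1.1
          (fun i hi => mem_deltaC_compl.mp hv.1.2 i hi)
    · -- A2 part
      apply Multiset.eq_replicate.mpr
      constructor
      · rw [Multiset.card_map, Finset.card_val, Finset.card_product, hA2,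
          Finset.card_sdiff_of_subset hsub, card_deltaC, card_deltaC, hcompl_card, hcompl_card,
          hU, Finset.card_univ, hcard_fun]
        ring
      · intro b hb
        obtain ⟨v, hv, rfl⟩ := Multiset.mem_map.mp hb
        rw [Finset.mem_val, Finset.mem_product, hA2, Finset.mem_sdiff] at hv
        have hvN : ∀ i ∈ N, v.1 i = 0 := mem_deltaC_compl.mp hv.1.1
        have hexM : ∃ i ∈ M, v.1 i ≠ 0 := by
          have := hv.1.2
          rw [mem_deltaC_compl] at this
          push_neg at this
          obtain ⟨i, hi, hne⟩ := this
          rcases Finset.mem_union.mp hi with hiM | hiN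
          · exact ⟨i, hiM, hne⟩
          · exact absurd (hvN i hiN) hne
        exact weight_case2 M N Ds hDs v hm hNlt hNpos hvN hexM
    · -- A3 part
      apply Multiset.eq_replicate.mpr
      constructor
      · rw [Multiset.card_map, Finset.card_val, Finset.card_product, hA3,
          Finset.card_compl, card_deltaC, hcompl_card, hcard_fun,
          hU, Finset.card_univ, hcard_fun]
        ring
      · intro b hb
        obtain ⟨v, hv, rfl⟩ := Multiset.mem_map.mp hb
        rw [Finset.mem_val, Finset.mem_product, hA3, Finset.mem_compl] at hv
        have hexN : ∃ i ∈ N, v.1 i ≠ 0 := by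
          have := hv.1
          rw [mem_deltaC_compl] at this
          push_neg at this
          exact this
        exact weight_case3 M N Ds hDs v hm hNpos hexN
    · -- A0 part
      apply Multiset.eq_replicate.mpr
      constructor
      · rw [Multiset.card_map, Finset.card_val, Finset.card_product, hA0,
          Finset.card_singleton, hU, Finset.card_univ, hcard_fun]
        ring
      · intro b hb
        obtain ⟨v, hv, rfl⟩ := Multiset.mem_map.mp hb
        rw [Finset.mem_val, Finset.mem_product, hA0, Finset.mem_singleton] at hv
        exact weight_case0 M N Ds hDs v hv.1
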